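/- Under the hypotheses of the vector-field cancellation theorem (with V(Φ) = βΦ, H(Φ) = −3β²κ/(1+βκΦ), and R determined by the trace of the modified Einstein equations), if the trace of the matter energy-momentum tensor vanishes, T = 0, and λ ≠ 0, then Ω = 4βλ ≠ 0 (assuming β ≠ 0), so the vector field equation acquires a nonzero mass term proportional to βλ. -/

import Mathlib

/-!
Multiply the trace constraint by `βκ` and substitute `βR` from the definition of `Ω`, weighted
by `1 + βκΦ`. Every `X`- and `Y`-term then cancels, because `(1 + βκΦ) H = -3β²κ` is constant and
`(1 + βκΦ) H' = -βκ H` (as `H' = dH/dΦ`), which leaves `Ω = βκT + 4βλ`.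
-/

theorem mass_eq_of_trace_constraint {β κ lam Φ X Y R Ω T H H' : ℝ} (hκ : κ ≠ 0)
    (hH : (1 + β * κ * Φ) * H = -3 * β ^ 2 * κ)
    (hH' : (1 + β * κ * Φ) * H' = -(β * κ * H))
    (hΩ : Ω = β * R - (1 / 2) * H' * X - H * Y)
    (hR : -(1 / κ + β * Φ) * R = 3 * β * Y + (1 / 2) * H * X - Ω * Φ - T - 4 * lam / κ) :
    Ω = β * (κ * T + 4 * lam) := by
  have hR' : -(1 + β * κ * Φ) * R = 3 * β * κ * Y + (1 / 2) * κ * H * X - κ * Ω * Φ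
      - κ * T - 4 * lam := by
    field_simp at hR
    linear_combination (1 / 2) * hR
  linear_combination (1 + β * κ * Φ) * hΩ - β * hR' - (1 / 2) * X * hH' - Y * hH

/-- With traceless matter (`T = 0`) and nonvanishing vacuum term `λ ≠ 0`
(and `β ≠ 0`), the mass coefficient is `Ω = 4βλ ≠ 0`. -/
theorem vector_mass_nonzero (β κ lam Φ X Y R Ω : ℝ)
    (hD : 1 + β * κ * Φ ≠ 0) (hκ : κ ≠ 0) (hβ : β ≠ 0) (hlam : lam ≠ 0)
    (hΩ : Ω = β * R - (1 / 2) * (3 * β ^ 3 * κ ^ 2 / (1 + β * κ * Φ) ^ 2) * X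
      - (-3 * β ^ 2 * κ / (1 + β * κ * Φ)) * Y)
    (hR : -(1 / κ + β * Φ) * R =
      3 * β * Y + (1 / 2) * (-3 * β ^ 2 * κ / (1 + β * κ * Φ)) * X
        - Ω * Φ - (0 : ℝ) - 4 * lam / κ) :
    Ω = 4 * β * lam ∧ Ω ≠ 0 := by
  have hmass := mass_eq_of_trace_constraint hκ (by field_simp) (by field_simp) hΩ hR
  have hΩ_eq : Ω = 4 * β * lam := by linear_combination hmass
  exact ⟨hΩ_eq, hΩ_eq ▸ mul_ne_zero (mul_ne_zero four_ne_zero hβ) hlam⟩
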